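/- arXiv:1010.3843 — 2 statements merged into one kernel-verified Lean document; each statement's English description precedes it below -/
import Mathlib

section
/- Let A and B be d×d positive semidefinite real matrices, and let √A, √B denote their positive semidefinite square roots. Then the Frobenius norm satisfies ‖√A − √B‖ ≤ d^{3/4} · √(‖A − B‖). -/
/-!
Put `C = S - T`, so that `S² - T² = S C + C T`. If `v` is a unit eigenvector of the symmetric
matrix `C` with eigenvalue `μ`, then `vᵀ (S² - T²) v = μ (vᵀ S v + vᵀ T v)`, while
`|μ| = |vᵀ S v - vᵀ T v| ≤ vᵀ S v + vᵀ T v` because both quadratic forms are nonnegative.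
Hence `μ² ≤ |vᵀ (A - B) v| ≤ ‖A - B‖`, and summing over the `d` eigenvalues of `C` gives
`‖S - T‖² ≤ d ‖A - B‖`, which is stronger than the claim since `√d ≤ d^{3/4}`.
-/

/-- The Frobenius norm of a real square matrix. -/
noncomputable def frobNorm {d : ℕ} (M : Matrix (Fin d) (Fin d) ℝ) : ℝ :=
  Real.sqrt (∑ i, ∑ j, (M i j) ^ 2)

open Matrix

namespace Matrix

variable {n : Type*} [Fintype n]

theorem IsHermitian.sum_sq_eq_sum_sq_eigenvalues [DecidableEq n] {C : Matrix n n ℝ}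
    (hC : C.IsHermitian) : ∑ i, ∑ j, C i j ^ 2 = ∑ i, hC.eigenvalues i ^ 2 := by
  have hsum : ∑ i, ∑ j, C i j ^ 2 = (C * C).trace := by
    simp only [trace, diag, mul_apply, sq]
    refine Finset.sum_congr rfl fun i _ => Finset.sum_congr rfl fun j _ => ?_
    rw [← hC.apply j i, star_trivial]
  rw [hsum]
  conv_lhs => rw [hC.spectral_theorem, ← map_mul]
  rw [Unitary.conjStarAlgAut_apply, trace_mul_cycle, Unitary.coe_star_mul_self, one_mul,
    diagonal_mul_diagonal, trace_diagonal]
  simp [sq]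

theorem IsHermitian.dotProduct_eigenvectorBasis_self [DecidableEq n] {C : Matrix n n ℝ}
    (hC : C.IsHermitian) (i : n) :
    ⇑(hC.eigenvectorBasis i) ⬝ᵥ ⇑(hC.eigenvectorBasis i) = 1 := by
  have h := real_inner_self_eq_norm_sq (hC.eigenvectorBasis i)
  rw [hC.eigenvectorBasis.orthonormal.1 i, EuclideanSpace.inner_eq_star_dotProduct] at h
  simpa using h

theorem dotProduct_mul_self_sub_mul_self_mulVec {S T : Matrix n n ℝ} (hC : (S - T)ᵀ = S - T)
    {v : n → ℝ} {μ : ℝ} (hv : (S - T) *ᵥ v = μ • v) :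
    v ⬝ᵥ ((S * S - T * T) *ᵥ v) = μ * (v ⬝ᵥ (S *ᵥ v) + v ⬝ᵥ (T *ᵥ v)) := by
  have hdecomp : S * S - T * T = S * (S - T) + (S - T) * T := by noncomm_ring
  have hCT : v ⬝ᵥ ((S - T) *ᵥ (T *ᵥ v)) = μ * (v ⬝ᵥ (T *ᵥ v)) := by
    rw [dotProduct_mulVec, ← mulVec_transpose, hC, hv, smul_dotProduct, smul_eq_mul]
  rw [hdecomp, add_mulVec, dotProduct_add, ← mulVec_mulVec, ← mulVec_mulVec, hv, mulVec_smul,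
    dotProduct_smul, smul_eq_mul, hCT]
  ring

theorem sq_le_abs_dotProduct_mul_self_sub_mul_self_mulVec {S T : Matrix n n ℝ}
    (hS : S.PosSemidef) (hT : T.PosSemidef) (hC : (S - T)ᵀ = S - T) {v : n → ℝ} {μ : ℝ}
    (hv : (S - T) *ᵥ v = μ • v) (hv1 : v ⬝ᵥ v = 1) :
    μ ^ 2 ≤ |v ⬝ᵥ ((S * S - T * T) *ᵥ v)| := by
  have ha : 0 ≤ v ⬝ᵥ (S *ᵥ v) := by simpa using hS.dotProduct_mulVec_nonneg v
  have hb : 0 ≤ v ⬝ᵥ (T *ᵥ v) := by simpa using hT.dotProduct_mulVec_nonneg v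
  have hμ : μ = v ⬝ᵥ (S *ᵥ v) - v ⬝ᵥ (T *ᵥ v) := by
    rw [← dotProduct_sub, ← sub_mulVec, hv, dotProduct_smul, hv1, smul_eq_mul, mul_one]
  rw [dotProduct_mul_self_sub_mul_self_mulVec hC hv, abs_mul, abs_of_nonneg (add_nonneg ha hb),
    sq, ← abs_mul_abs_self]
  gcongr
  rw [hμ, abs_le]
  constructor <;> linarith

end Matrix

theorem abs_dotProduct_mulVec_le_frobNorm {d : ℕ} (M : Matrix (Fin d) (Fin d) ℝ)
    (v : Fin d → ℝ) : |v ⬝ᵥ (M *ᵥ v)| ≤ frobNorm M * (v ⬝ᵥ v) := by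
  have hpairs : v ⬝ᵥ (M *ᵥ v) = ∑ p : Fin d × Fin d, M p.1 p.2 * (v p.1 * v p.2) := by
    simp only [Fintype.sum_prod_type, dotProduct, mulVec, Finset.mul_sum]
    exact Finset.sum_congr rfl fun i _ => Finset.sum_congr rfl fun j _ => by ring
  have hvv : ∑ p : Fin d × Fin d, (v p.1 * v p.2) ^ 2 = (v ⬝ᵥ v) ^ 2 := by
    rw [Fintype.sum_prod_type, sq, dotProduct, Finset.sum_mul_sum]
    exact Finset.sum_congr rfl fun i _ => Finset.sum_congr rfl fun j _ => by ring
  have hM : ∑ p : Fin d × Fin d, M p.1 p.2 ^ 2 = frobNorm M ^ 2 := by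
    rw [frobNorm, Real.sq_sqrt (by positivity), Fintype.sum_prod_type]
  have hnonneg : 0 ≤ frobNorm M * (v ⬝ᵥ v) :=
    mul_nonneg (Real.sqrt_nonneg _) (Finset.sum_nonneg fun i _ => mul_self_nonneg (v i))
  refine abs_le_of_sq_le_sq ?_ hnonneg
  rw [hpairs, mul_pow, ← hM, ← hvv]
  exact Finset.sum_mul_sq_le_sq_mul_sq _ _ _

theorem sq_frobNorm_sub_le {d : ℕ} {S T : Matrix (Fin d) (Fin d) ℝ}
    (hS : S.PosSemidef) (hT : T.PosSemidef) :
    frobNorm (S - T) ^ 2 ≤ d * frobNorm (S * S - T * T) := by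
  have hC : (S - T).IsHermitian := hS.1.sub hT.1
  have hCt : (S - T)ᵀ = S - T := by simpa [IsHermitian] using hC.eq
  have heig (i : Fin d) : hC.eigenvalues i ^ 2 ≤ frobNorm (S * S - T * T) := by
    have hv1 := hC.dotProduct_eigenvectorBasis_self i
    calc hC.eigenvalues i ^ 2
        ≤ |⇑(hC.eigenvectorBasis i) ⬝ᵥ ((S * S - T * T) *ᵥ ⇑(hC.eigenvectorBasis i))| :=
          sq_le_abs_dotProduct_mul_self_sub_mul_self_mulVec hS hT hCt
            (hC.mulVec_eigenvectorBasis i) hv1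
      _ ≤ frobNorm (S * S - T * T) := by
          simpa [hv1] using
            abs_dotProduct_mulVec_le_frobNorm (S * S - T * T) (hC.eigenvectorBasis i)
  rw [frobNorm, Real.sq_sqrt (by positivity), hC.sum_sq_eq_sum_sq_eigenvalues]
  simpa using Finset.sum_le_sum fun i (_ : i ∈ Finset.univ) => heig i

theorem frobNorm_sqrt_sub_sqrt_le_general (d : ℕ) (A B S T : Matrix (Fin d) (Fin d) ℝ)
    (hS : S.PosSemidef) (hT : T.PosSemidef)
    (hSA : S * S = A) (hTB : T * T = B) :
    frobNorm (S - T) ≤ (d : ℝ) ^ ((3 : ℝ) / 4) * Real.sqrt (frobNorm (A - B)) := by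
  subst hSA hTB
  have hsqrt_d : Real.sqrt d ≤ (d : ℝ) ^ ((3 : ℝ) / 4) := by
    rcases Nat.eq_zero_or_pos d with rfl | hd
    · simp
    · rw [Real.sqrt_eq_rpow]
      exact Real.rpow_le_rpow_of_exponent_le (by exact_mod_cast hd) (by norm_num)
  calc frobNorm (S - T)
      ≤ Real.sqrt (d * frobNorm (S * S - T * T)) :=
        Real.le_sqrt_of_sq_le (sq_frobNorm_sub_le hS hT)
    _ = Real.sqrt d * Real.sqrt (frobNorm (S * S - T * T)) := Real.sqrt_mul d.cast_nonneg _
    _ ≤ (d : ℝ) ^ ((3 : ℝ) / 4) * Real.sqrt (frobNorm (S * S - T * T)) := by gcongr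

/-- If `A` and `B` are `d × d` positive semidefinite real matrices with positive
semidefinite square roots `S` and `T` respectively, then
`‖S − T‖_F ≤ d^{3/4} · √(‖A − B‖_F)`. -/
theorem frobNorm_sqrt_sub_sqrt_le (d : ℕ) (A B S T : Matrix (Fin d) (Fin d) ℝ)
    (hA : A.PosSemidef) (hB : B.PosSemidef)
    (hS : S.PosSemidef) (hT : T.PosSemidef)
    (hSA : S * S = A) (hTB : T * T = B) :
    frobNorm (S - T) ≤ (d : ℝ) ^ ((3 : ℝ) / 4) * Real.sqrt (frobNorm (A - B)) :=
  frobNorm_sqrt_sub_sqrt_le_general d A B S T hS hT hSA hTB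
end

section
/- Let X₁, …, X_n be i.i.d. real random variables with mean 0 and E X₁² = σ², satisfying |X₁| ≤ C almost surely and E X₁² ≤ a², E|X₁|³ ≤ a³ for constants 0 < a ≤ C. Let f_n be the characteristic function of (X₁ + ⋯ + X_n)/√n. Then for all u with |u| ≤ 0.4√n / C, one has |f_n(u) − exp(−σ²u²/2)| ≤ 0.25 |u|³ a³ / √n. -/
open MeasureTheory ProbabilityTheory Complex
open scoped Nat ComplexConjugate

/-! Write `t = u/√n`. By independence and identical distribution the characteristic function of
the normalized sum is `φ(t)^n`, where `φ` is that of `X₁`, while the Gaussian factor is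
`g^n` with `g = exp(-σ²t²/2)`. Both `φ(t)` and `g` lie in the unit disc, so
`|φ(t)^n - g^n| ≤ n |φ(t) - g|`. The third-order Taylor bound `|e^{ix} - 1 - ix + x²/2| ≤ |x|³/6`
gives `|φ(t) - (1 - σ²t²/2)| ≤ |t|³ E|X₁|³/6`, and `|e^{-y} - (1 - y)| ≤ y²/2` for `y ≥ 0`
handles `g`. Since `a|t| ≤ 0.4`, the quartic term `σ⁴t⁴/8` is at most `0.05 |t|³a³`, so
`n |φ(t) - g| ≤ (1/6 + 0.05) n |t|³a³ ≤ 0.25 |u|³a³/√n`. -/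

lemma norm_pow_sub_pow_le_of_norm_le_one {R : Type*} [SeminormedRing R] [NormOneClass R]
    {z w : R} (hz : ‖z‖ ≤ 1) (hw : ‖w‖ ≤ 1) (n : ℕ) :
    ‖z ^ n - w ^ n‖ ≤ n * ‖z - w‖ := by
  induction n with
  | zero => simp
  | succ n ih =>
    calc ‖z ^ (n + 1) - w ^ (n + 1)‖ = ‖z ^ n * (z - w) + (z ^ n - w ^ n) * w‖ := by
          congr 1; noncomm_ring
      _ ≤ ‖z‖ ^ n * ‖z - w‖ + ‖z ^ n - w ^ n‖ * ‖w‖ :=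
          (norm_add_le _ _).trans (add_le_add ((norm_mul_le _ _).trans
            (mul_le_mul_of_nonneg_right (norm_pow_le _ _) (norm_nonneg _))) (norm_mul_le _ _))
      _ ≤ 1 * ‖z - w‖ + (n * ‖z - w‖) * 1 := by
          gcongr
          exact pow_le_one₀ (norm_nonneg _) hz
      _ = (n + 1 : ℕ) * ‖z - w‖ := by push_cast; ring

lemma abs_exp_neg_sub_one_sub_le {x : ℝ} (hx : 0 ≤ x) :
    |Real.exp (-x) - (1 - x)| ≤ x ^ 2 / 2 := by
  have hf : ∀ s : ℝ, HasDerivAt (fun s => Real.exp (-s) - (1 - s)) (1 - Real.exp (-s)) s :=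
    fun s => by
      refine ((hasDerivAt_neg s).exp.sub ((hasDerivAt_id s).const_sub 1)).congr_deriv ?_
      ring
  have hB : ∀ s : ℝ, HasDerivAt (fun s : ℝ => s ^ 2 / 2) s s := fun s => by
    refine ((hasDerivAt_pow 2 s).div_const 2).congr_deriv ?_
    ring
  refine image_norm_le_of_norm_deriv_right_le_deriv_boundary (a := 0) (b := x)
    (fun s _ => (hf s).continuousAt.continuousWithinAt) (fun s _ => (hf s).hasDerivWithinAt)
    (by simp) hB (fun s hs => ?_) ⟨hx, le_rfl⟩
  rw [Real.norm_eq_abs, abs_of_nonneg (by simpa using Real.exp_le_one_iff.2 (neg_nonpos.2 hs.1))]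
  linarith [Real.add_one_le_exp (-s)]

lemma cube_div_six_add_sq_div_two_le {a m v t : ℝ} (ha : 0 ≤ a) (hm : m ≤ a ^ 3) (hv : 0 ≤ v)
    (hva : v ≤ a ^ 2) (hat : a * |t| ≤ 0.4) :
    |t| ^ 3 * m / 6 + (v * t ^ 2 / 2) ^ 2 / 2 ≤ 0.25 * |t| ^ 3 * a ^ 3 := by
  have hcube : |t| ^ 3 * m ≤ |t| ^ 3 * a ^ 3 := mul_le_mul_of_nonneg_left hm (by positivity)
  have hquartic : (v * t ^ 2 / 2) ^ 2 / 2 ≤ |t| ^ 3 * a ^ 3 * (a * |t|) / 8 :=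
    calc (v * t ^ 2 / 2) ^ 2 / 2 = v ^ 2 * |t| ^ 4 / 8 := by rw [← sq_abs t]; ring
      _ ≤ (a ^ 2) ^ 2 * |t| ^ 4 / 8 := by gcongr
      _ = |t| ^ 3 * a ^ 3 * (a * |t|) / 8 := by ring
  have hsmall : |t| ^ 3 * a ^ 3 * (a * |t|) ≤ |t| ^ 3 * a ^ 3 * 0.4 :=
    mul_le_mul_of_nonneg_left hat (by positivity)
  have : 0 ≤ |t| ^ 3 * a ^ 3 := by positivity
  linarith

lemma hasDerivAt_cexp_mul_I_sub_taylor (n : ℕ) (t : ℝ) :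
    HasDerivAt (fun s : ℝ => cexp (s * I) - ∑ k ∈ Finset.range (n + 1), (s * I) ^ k / k !)
      (I * (cexp (t * I) - ∑ k ∈ Finset.range n, (t * I) ^ k / k !)) t := by
  have hlin : HasDerivAt (fun s : ℝ => (s : ℂ) * I) I t := by
    simpa using (hasDerivAt_id t).ofReal_comp.mul_const I
  have hterm : ∀ k : ℕ, HasDerivAt (fun s : ℝ => (s * I) ^ (k + 1) / (k + 1)!)
      (I * ((t * I) ^ k / k !)) t := fun k => by
    refine ((hlin.fun_pow (k + 1)).div_const ((k + 1)! : ℂ)).congr_deriv ?_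
    push_cast [Nat.factorial_succ, Nat.add_sub_cancel]
    field_simp
  simp only [Finset.sum_range_succ', pow_zero, Nat.factorial_zero, Nat.cast_one, div_one,
    mul_sub, Finset.mul_sum]
  refine (hlin.cexp.fun_sub ((HasDerivAt.fun_sum fun k _ => hterm k).add_const 1)).congr_deriv ?_
  ring

/- The sharp constant `1/n!` (`taylor_mean_remainder_bound` only gives `1/(n-1)!`) is what
leaves room for the constant `0.25`. -/
lemma norm_cexp_mul_I_sub_taylor_le_of_nonneg (n : ℕ) {x : ℝ} (hx : 0 ≤ x) :
    ‖cexp (x * I) - ∑ k ∈ Finset.range n, (x * I) ^ k / (k ! : ℂ)‖ ≤ x ^ n / n ! := by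
  induction n generalizing x with
  | zero => simp [norm_exp_ofReal_mul_I]
  | succ n ih =>
    have hB : ∀ s : ℝ, HasDerivAt (fun s : ℝ => s ^ (n + 1) / (n + 1)!) (s ^ n / n !) s :=
      fun s => by
        refine ((hasDerivAt_pow (n + 1) s).div_const _).congr_deriv ?_
        push_cast [Nat.factorial_succ]
        field_simp
    refine image_norm_le_of_norm_deriv_right_le_deriv_boundary (a := 0) (b := x)
      (fun s _ => (hasDerivAt_cexp_mul_I_sub_taylor n s).continuousAt.continuousWithinAt)
      (fun s _ => (hasDerivAt_cexp_mul_I_sub_taylor n s).hasDerivWithinAt) ?_ hB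
      (fun s hs => ?_) ⟨hx, le_rfl⟩
    · simp [Finset.sum_range_succ']
    · rw [norm_mul, norm_I, one_mul]
      exact ih hs.1

lemma cexp_mul_I_sub_taylor_neg (n : ℕ) (x : ℝ) :
    cexp ((-x : ℝ) * I) - ∑ k ∈ Finset.range n, ((-x : ℝ) * I) ^ k / (k ! : ℂ)
      = conj (cexp (x * I) - ∑ k ∈ Finset.range n, (x * I) ^ k / (k ! : ℂ)) := by
  simp [← exp_conj]

lemma norm_cexp_mul_I_sub_taylor_le (n : ℕ) (x : ℝ) :
    ‖cexp (x * I) - ∑ k ∈ Finset.range n, (x * I) ^ k / (k ! : ℂ)‖ ≤ |x| ^ n / n ! := by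
  rcases le_total 0 x with hx | hx
  · simpa [abs_of_nonneg hx] using norm_cexp_mul_I_sub_taylor_le_of_nonneg n hx
  · have := norm_cexp_mul_I_sub_taylor_le_of_nonneg n (neg_nonneg.2 hx)
    rwa [cexp_mul_I_sub_taylor_neg, RCLike.norm_conj, ← abs_of_nonpos hx] at this

lemma norm_integral_cexp_mul_I_sub_taylor_le {μ : Measure ℝ} {n : ℕ}
    (hμ : Integrable (fun x => |x| ^ n) μ) (t : ℝ) :
    ‖∫ x, (cexp ((t * x : ℝ) * I)
        - ∑ k ∈ Finset.range n, ((t * x : ℝ) * I) ^ k / (k ! : ℂ)) ∂μ‖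
      ≤ |t| ^ n * (∫ x, |x| ^ n ∂μ) / n ! := by
  rw [← integral_const_mul, ← integral_div]
  refine norm_integral_le_of_norm_le ((hμ.const_mul _).div_const _) (ae_of_all _ fun x => ?_)
  simpa [abs_mul, mul_pow] using norm_cexp_mul_I_sub_taylor_le n (t * x)

lemma sum_range_three_mul_I_pow_div_factorial (y : ℝ) :
    ∑ k ∈ Finset.range 3, (y * I) ^ k / (k ! : ℂ) = ((1 - y ^ 2 / 2 : ℝ) : ℂ) + y * I := by
  simp only [Finset.sum_range_succ, Finset.sum_range_zero]
  push_cast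
  ring_nf
  rw [I_sq]
  ring

section CharFun

variable {μ : Measure ℝ} [IsProbabilityMeasure μ]

lemma integrable_one_sub_mul_sq_div_two (hμ : MemLp id 2 μ) (t : ℝ) :
    Integrable (fun x : ℝ => 1 - (t * x) ^ 2 / 2) μ := by
  simp_rw [mul_pow]
  exact (integrable_const 1).sub ((hμ.integrable_sq.const_mul _).div_const _)

lemma integrable_cexp_mul_I_taylor_two (hμ : MemLp id 2 μ) (t : ℝ) :
    Integrable (fun x : ℝ => ∑ k ∈ Finset.range 3, ((t * x : ℝ) * I) ^ k / (k ! : ℂ)) μ := by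
  simp_rw [sum_range_three_mul_I_pow_div_factorial]
  exact (integrable_one_sub_mul_sq_div_two hμ t).ofReal.add
    (((hμ.integrable one_le_two).const_mul t).ofReal.mul_const I)

lemma integral_cexp_mul_I_taylor_two (hμ : MemLp id 2 μ) (hmean : ∫ x, x ∂μ = 0) (t : ℝ) :
    ∫ x, ∑ k ∈ Finset.range 3, ((t * x : ℝ) * I) ^ k / (k ! : ℂ) ∂μ
      = ((1 - (∫ x, x ^ 2 ∂μ) * t ^ 2 / 2 : ℝ) : ℂ) := by
  have h1 : Integrable (fun x : ℝ => x) μ := hμ.integrable one_le_two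
  have h2 : Integrable (fun x : ℝ => x ^ 2) μ := hμ.integrable_sq
  have hquad : Integrable (fun x : ℝ => ((1 - (t * x) ^ 2 / 2 : ℝ) : ℂ)) μ :=
    (integrable_one_sub_mul_sq_div_two hμ t).ofReal
  have hlin : Integrable (fun x : ℝ => ((t * x : ℝ) : ℂ) * I) μ :=
    (h1.const_mul t).ofReal.mul_const I
  simp_rw [sum_range_three_mul_I_pow_div_factorial]
  rw [integral_add hquad hlin, integral_mul_const, integral_complex_ofReal,
    integral_complex_ofReal, integral_const_mul, hmean]
  simp_rw [mul_pow]
  rw [integral_sub (integrable_const 1) ((h2.const_mul _).div_const _), integral_div,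
    integral_const_mul]
  simp only [integral_const, probReal_univ, smul_eq_mul, mul_one, mul_zero, ofReal_zero,
    zero_mul, add_zero]
  ring_nf

lemma norm_charFun_sub_one_add_le (hμ : MemLp id 3 μ) (hmean : ∫ x, x ∂μ = 0) (t : ℝ) :
    ‖charFun μ t - ((1 - (∫ x, x ^ 2 ∂μ) * t ^ 2 / 2 : ℝ) : ℂ)‖
      ≤ |t| ^ 3 * (∫ x, |x| ^ 3 ∂μ) / 6 := by
  have h2 : MemLp id 2 μ := hμ.mono_exponent (by norm_num)
  have hcexp : Integrable (fun x : ℝ => cexp ((t * x : ℝ) * I)) μ :=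
    (integrable_const (1 : ℝ)).mono' (by fun_prop)
      (ae_of_all _ fun x => (norm_exp_ofReal_mul_I _).le)
  calc ‖charFun μ t - ((1 - (∫ x, x ^ 2 ∂μ) * t ^ 2 / 2 : ℝ) : ℂ)‖
      = ‖∫ x, (cexp ((t * x : ℝ) * I)
          - ∑ k ∈ Finset.range 3, ((t * x : ℝ) * I) ^ k / (k ! : ℂ)) ∂μ‖ := by
        rw [integral_sub hcexp (integrable_cexp_mul_I_taylor_two h2 t),
          integral_cexp_mul_I_taylor_two h2 hmean t, charFun_apply_real]
        push_cast
        rfl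
    _ ≤ |t| ^ 3 * (∫ x, |x| ^ 3 ∂μ) / 3 ! := norm_integral_cexp_mul_I_sub_taylor_le
        (by simpa using hμ.integrable_norm_pow (by norm_num)) t
    _ = |t| ^ 3 * (∫ x, |x| ^ 3 ∂μ) / 6 := rfl

lemma norm_charFun_sub_exp_le (hμ : MemLp id 3 μ) (hmean : ∫ x, x ∂μ = 0) (t : ℝ) :
    ‖charFun μ t - (Real.exp (-((∫ x, x ^ 2 ∂μ) * t ^ 2) / 2) : ℂ)‖
      ≤ |t| ^ 3 * (∫ x, |x| ^ 3 ∂μ) / 6 + ((∫ x, x ^ 2 ∂μ) * t ^ 2 / 2) ^ 2 / 2 := by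
  set v := ∫ x, x ^ 2 ∂μ
  have hv : 0 ≤ v * t ^ 2 / 2 := by positivity
  have hexp : ‖((1 - v * t ^ 2 / 2 : ℝ) : ℂ) - (Real.exp (-(v * t ^ 2) / 2) : ℂ)‖
      ≤ (v * t ^ 2 / 2) ^ 2 / 2 := by
    rw [← ofReal_sub, norm_real, Real.norm_eq_abs, abs_sub_comm, neg_div]
    exact abs_exp_neg_sub_one_sub_le hv
  calc ‖charFun μ t - (Real.exp (-(v * t ^ 2) / 2) : ℂ)‖
      ≤ ‖charFun μ t - ((1 - v * t ^ 2 / 2 : ℝ) : ℂ)‖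
        + ‖((1 - v * t ^ 2 / 2 : ℝ) : ℂ) - (Real.exp (-(v * t ^ 2) / 2) : ℂ)‖ :=
        norm_sub_le_norm_sub_add_norm_sub _ _ _
    _ ≤ _ := add_le_add (norm_charFun_sub_one_add_le hμ hmean t) hexp

lemma norm_charFun_pow_sub_exp_pow_le (hμ : MemLp id 3 μ) (hmean : ∫ x, x ∂μ = 0) {v a t : ℝ}
    (hvar : ∫ x, x ^ 2 ∂μ = v) (ha : 0 ≤ a) (hva : v ≤ a ^ 2) (hm3 : ∫ x, |x| ^ 3 ∂μ ≤ a ^ 3)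
    (hat : a * |t| ≤ 0.4) (n : ℕ) :
    ‖charFun μ t ^ n - (Real.exp (-(v * t ^ 2) / 2) : ℂ) ^ n‖ ≤ n * (0.25 * |t| ^ 3 * a ^ 3) := by
  subst hvar
  have hv : 0 ≤ ∫ x, x ^ 2 ∂μ := integral_nonneg fun x => sq_nonneg x
  have hexp : ‖(Real.exp (-((∫ x, x ^ 2 ∂μ) * t ^ 2) / 2) : ℂ)‖ ≤ 1 := by
    rw [norm_real, Real.norm_of_nonneg (Real.exp_nonneg _), Real.exp_le_one_iff]
    have := mul_nonneg hv (sq_nonneg t)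
    linarith
  calc _ ≤ n * ‖charFun μ t - (Real.exp (-((∫ x, x ^ 2 ∂μ) * t ^ 2) / 2) : ℂ)‖ :=
        norm_pow_sub_pow_le_of_norm_le_one (norm_charFun_le_one t) hexp n
    _ ≤ n * (|t| ^ 3 * (∫ x, |x| ^ 3 ∂μ) / 6 + ((∫ x, x ^ 2 ∂μ) * t ^ 2 / 2) ^ 2 / 2) := by
        gcongr
        exact norm_charFun_sub_exp_le hμ hmean t
    _ ≤ n * (0.25 * |t| ^ 3 * a ^ 3) := by
        gcongr
        exact cube_div_six_add_sq_div_two_le ha hm3 hv hva hat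

end CharFun

lemma charFun_map_sum_eq_pow {Ω ι : Type*} [MeasurableSpace Ω] {P : Measure Ω} [Fintype ι]
    {X : ι → Ω → ℝ} (hX : ∀ i, AEMeasurable (X i) P) (hindep : iIndepFun X P)
    (hid : ∀ i j, P.map (X i) = P.map (X j)) (i₀ : ι) (t : ℝ) :
    charFun (P.map (fun ω => ∑ i, X i ω)) t = charFun (P.map (X i₀)) t ^ Fintype.card ι := by
  rw [hindep.charFun_map_fun_sum_eq_prod hX, Finset.prod_apply]
  simp [hid _ i₀]

lemma natCast_mul_abs_div_sqrt_pow_three (n : ℕ) (u : ℝ) :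
    n * |u / √(n : ℝ)| ^ 3 = |u| ^ 3 / √(n : ℝ) := by
  rcases n.eq_zero_or_pos with rfl | hn
  · simp
  have hs : 0 < √(n : ℝ) := Real.sqrt_pos.2 (by exact_mod_cast hn)
  rw [abs_div, abs_of_pos hs]
  field_simp
  rw [Real.sq_sqrt (Nat.cast_nonneg n), mul_comm]

/-- Let `X₁, …, Xₙ` be i.i.d. real random variables with mean `0` and `E X₁² = σ²`,
with `|X₁| ≤ C` almost surely, `E X₁² ≤ a²`, `E|X₁|³ ≤ a³` for constants `0 < a ≤ C`.
Then the characteristic function `fₙ` of `(X₁ + ⋯ + Xₙ)/√n` satisfies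
`|fₙ(u) − exp(−σ²u²/2)| ≤ 0.25 |u|³ a³ / √n` whenever `|u| ≤ 0.4 √n / C`. -/
theorem charFun_normalized_sum_close_to_gaussian {Ω : Type*} [MeasurableSpace Ω]
    (P : Measure Ω) [IsProbabilityMeasure P]
    (n : ℕ) (hn : 0 < n) (X : Fin n → Ω → ℝ)
    (hmeas : ∀ i, Measurable (X i))
    (hindep : iIndepFun X P)
    (hid : ∀ i j, Measure.map (X i) P = Measure.map (X j) P)
    (σ a C : ℝ) (ha : 0 < a) (haC : a ≤ C)
    (hmean : ∀ i, ∫ ω, X i ω ∂P = 0)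
    (hvar : ∀ i, ∫ ω, (X i ω) ^ 2 ∂P = σ ^ 2)
    (hm2 : ∀ i, ∫ ω, (X i ω) ^ 2 ∂P ≤ a ^ 2)
    (hm3 : ∀ i, ∫ ω, |X i ω| ^ 3 ∂P ≤ a ^ 3)
    (hbdd : ∀ i, ∀ᵐ ω ∂P, |X i ω| ≤ C)
    (u : ℝ) (hu : |u| ≤ 0.4 * Real.sqrt n / C) :
    ‖(∫ ω, Complex.exp (Complex.I * (u * ((∑ i, X i ω) / Real.sqrt n))) ∂P)
          - (Real.exp (-(σ ^ 2 * u ^ 2) / 2) : ℂ)‖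
      ≤ 0.25 * |u| ^ 3 * a ^ 3 / Real.sqrt n := by
  have hs : 0 < √(n : ℝ) := Real.sqrt_pos.2 (by exact_mod_cast hn)
  set t := u / √(n : ℝ) with ht
  let i₀ : Fin n := ⟨0, hn⟩
  set μ := P.map (X i₀)
  have : IsProbabilityMeasure μ := Measure.isProbabilityMeasure_map (hmeas i₀).aemeasurable
  have hmoment (f : ℝ → ℝ) (hf : Continuous f) : ∫ x, f x ∂μ = ∫ ω, f (X i₀ ω) ∂P :=
    integral_map (hmeas i₀).aemeasurable hf.aestronglyMeasurable
  have hμ : MemLp id 3 μ :=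
    (memLp_map_measure_iff aestronglyMeasurable_id (hmeas i₀).aemeasurable).2 <|
      MemLp.of_bound (hmeas i₀).aestronglyMeasurable C (hbdd i₀)
  have hcharFun : ∫ ω, cexp (I * (u * ((∑ i, X i ω) / √(n : ℝ)))) ∂P = charFun μ t ^ n := by
    have hpow := charFun_map_sum_eq_pow (fun i => (hmeas i).aemeasurable) hindep hid i₀ t
    rw [Fintype.card_fin] at hpow
    rw [← hpow, charFun_apply_real, integral_map (by fun_prop) (by fun_prop)]
    congr with ω
    congr 1
    push_cast [ht]
    ring
  have hgauss : (Real.exp (-(σ ^ 2 * u ^ 2) / 2) : ℂ)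
      = (Real.exp (-(σ ^ 2 * t ^ 2) / 2) : ℂ) ^ n := by
    rw [← ofReal_pow, ← Real.exp_nat_mul, ht, div_pow, Real.sq_sqrt (Nat.cast_nonneg n)]
    field_simp
  have hat : a * |t| ≤ 0.4 :=
    calc a * |t| ≤ C * |t| := by gcongr
      _ = |u| * C / √(n : ℝ) := by rw [ht, abs_div, abs_of_pos hs]; ring
      _ ≤ 0.4 * √(n : ℝ) / √(n : ℝ) :=
          div_le_div_of_nonneg_right ((le_div_iff₀ (ha.trans_le haC)).1 hu) hs.le
      _ = 0.4 := by field_simp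
  rw [hcharFun, hgauss]
  calc _ ≤ n * (0.25 * |t| ^ 3 * a ^ 3) :=
        norm_charFun_pow_sub_exp_pow_le hμ ((hmoment id continuous_id).trans (hmean i₀))
          ((hmoment _ (continuous_pow 2)).trans (hvar i₀)) ha.le (hvar i₀ ▸ hm2 i₀)
          ((hmoment (|·| ^ 3) (by fun_prop)).trans_le (hm3 i₀)) hat n
    _ = 0.25 * |u| ^ 3 * a ^ 3 / √(n : ℝ) := by
        linear_combination 0.25 * a ^ 3 * natCast_mul_abs_div_sqrt_pow_three n u
end
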